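/- arXiv:1708.09527 — 2 statements merged into one kernel-verified Lean document; each statement's English description precedes it below -/
import Mathlib

section
/- Let S = ⟨r₁,…,r_k⟩ with r₁ < ⋯ < r_k and d = gcd(r₁,…,r_k), and n > r_k² with gcd(n,d) = 1 and dn ∈ S. Then the elements of Ap(S; dn) are pairwise distinct modulo n, and hence so are the elements {i + m_S(i)·n : i ∈ Ap(S; dn)}. -/
open scoped Classical

/-- Membership in the additive submonoid of `ℕ` generated by `r 0, …, r (k-1)`. -/
def memGen {k : ℕ} (r : Fin k → ℕ) (a : ℕ) : Prop :=
  ∃ z : Fin k → ℕ, a = ∑ i, z i * r i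

/-- The Apéry set `Ap(S; x) = {m ∈ S : m - x ∉ S}` (subtraction in `ℤ`,
encoded by the guard `x ≤ m`). -/
def aperySet {k : ℕ} (r : Fin k → ℕ) (x : ℕ) : Set ℕ :=
  {m | memGen r m ∧ ¬(x ≤ m ∧ memGen r (m - x))}

/-- The set of factorization lengths of `a` in the monoid generated by `r`. -/
def lenSet {k : ℕ} (r : Fin k → ℕ) (a : ℕ) : Set ℕ :=
  {ℓ | ∃ z : Fin k → ℕ, a = ∑ i, z i * r i ∧ ℓ = ∑ i, z i}

/-- The minimum factorization length of `a` in the monoid generated by `r`. -/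
noncomputable def minLen {k : ℕ} (r : Fin k → ℕ) (a : ℕ) : ℕ :=
  sInf (lenSet r a)

/-- The generators `n, n + r 0, …, n + r (k-1)` of the shifted monoid `M_n`. -/
def shiftGen {k : ℕ} (n : ℕ) (r : Fin k → ℕ) : Fin (k + 1) → ℕ :=
  Fin.cons n (fun i => n + r i)

/-- The genus: the number of gaps of the monoid generated by `r`. -/
noncomputable def genus {k : ℕ} (r : Fin k → ℕ) : ℕ :=
  Set.ncard {m : ℕ | ¬ memGen r m}

/-- The Frobenius number: the largest gap of the monoid generated by `r`. -/
noncomputable def frob {k : ℕ} (r : Fin k → ℕ) : ℕ :=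
  sSup {m : ℕ | ¬ memGen r m}

/-- The set of pseudo-Frobenius numbers of the monoid generated by `r`. -/
def pseudoFrob {k : ℕ} (r : Fin k → ℕ) : Set ℕ :=
  {m | ¬ memGen r m ∧ ∀ x : ℕ, memGen r x → 0 < x → memGen r (m + x)}

/-!
If `a < b` lie in `Ap(S; x)` with `x ∈ S` and `b - a = t x`, then `b - x = a + (t - 1) x ∈ S`,
contradicting `b ∈ Ap(S; x)`; so `Ap(S; x)` is injective modulo `x`. For `x = dn`, all of `S`
lies in `dℕ`, and `gcd(n, d) = 1` lifts a congruence modulo `n` to one modulo `dn`.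
-/

section Apery

variable {k : ℕ} {r : Fin k → ℕ}

lemma memGen_add {a b : ℕ} (ha : memGen r a) (hb : memGen r b) : memGen r (a + b) := by
  obtain ⟨z, rfl⟩ := ha
  obtain ⟨w, rfl⟩ := hb
  exact ⟨z + w, by simp [add_mul, Finset.sum_add_distrib]⟩

lemma memGen_mul_left {a : ℕ} (ha : memGen r a) (t : ℕ) : memGen r (t * a) := by
  induction t with
  | zero => exact ⟨0, by simp⟩
  | succ t ih => rw [Nat.succ_mul]; exact memGen_add ih ha

lemma gcd_dvd_of_memGen {a : ℕ} (ha : memGen r a) : Finset.univ.gcd r ∣ a := by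
  obtain ⟨z, rfl⟩ := ha
  exact Finset.dvd_sum fun i _ => (Finset.gcd_dvd (Finset.mem_univ i)).mul_left _

lemma aperySet_injOn_mod {x : ℕ} (hx : memGen r x) : Set.InjOn (· % x) (aperySet r x) := by
  intro a ha b hb hab
  wlog hle : a ≤ b generalizing a b
  · exact (this hb ha hab.symm (le_of_not_ge hle)).symm
  obtain ⟨t, ht⟩ := (Nat.modEq_iff_dvd' hle).mp hab
  rcases t with _ | t
  · omega
  rw [mul_add_one, mul_comm] at ht
  refine absurd ⟨by omega, ?_⟩ hb.2
  rw [show b - x = a + t * x by omega]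
  exact memGen_add ha.1 (memGen_mul_left hx t)

lemma aperySet_injOn_mod_of_coprime {d n : ℕ} (hd : d = Finset.univ.gcd r)
    (hgcd : Nat.gcd n d = 1) (hdn : memGen r (d * n)) :
    Set.InjOn (· % n) (aperySet r (d * n)) := by
  intro a ha b hb hab
  have hmod_d : a ≡ b [MOD d] :=
    (Nat.modEq_zero_iff_dvd.mpr (hd ▸ gcd_dvd_of_memGen ha.1)).trans
      (Nat.modEq_zero_iff_dvd.mpr (hd ▸ gcd_dvd_of_memGen hb.1)).symm
  exact aperySet_injOn_mod hdn ha hb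
    ((Nat.modEq_and_modEq_iff_modEq_mul (Nat.coprime_comm.mp hgcd)).mp ⟨hmod_d, hab⟩)

end Apery

theorem apery_distinct_mod_general {k : ℕ} (r : Fin (k + 1) → ℕ)
    (d : ℕ) (hd : d = Finset.univ.gcd r)
    (n : ℕ)
    (hgcd : Nat.gcd n d = 1) (hdn : memGen r (d * n)) :
    Set.InjOn (· % n) (aperySet r (d * n)) ∧
      Set.InjOn (fun i => (i + minLen r i * n) % n) (aperySet r (d * n)) := by
  have hinj := aperySet_injOn_mod_of_coprime hd hgcd hdn
  refine ⟨hinj, fun a ha b hb hab => hinj ha hb ?_⟩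
  simpa only [Nat.add_mul_mod_self_right] using hab

/-- For `n > r_k²` with `gcd(n,d) = 1` and `dn ∈ S`, the elements of
`Ap(S; dn)` are pairwise distinct modulo `n`, and hence so are the elements
`{i + m_S(i)·n : i ∈ Ap(S; dn)}`. -/
theorem apery_distinct_mod {k : ℕ} (r : Fin (k + 1) → ℕ)
    (hmono : StrictMono r) (hpos : 0 < r 0)
    (d : ℕ) (hd : d = Finset.univ.gcd r)
    (n : ℕ) (hn : n > (r (Fin.last k)) ^ 2)
    (hgcd : Nat.gcd n d = 1) (hdn : memGen r (d * n)) :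
    Set.InjOn (· % n) (aperySet r (d * n)) ∧
      Set.InjOn (fun i => (i + minLen r i * n) % n) (aperySet r (d * n)) :=
  apery_distinct_mod_general r d hd n hgcd hdn
end

section
/- Suppose M = ⟨n₁,…,n_k⟩ is a numerical monoid with n₁ < ⋯ < n_k. The minimum factorization length function m : M → ℤ≥0 satisfies m(a + n_k) = m(a) + 1 for all a ∈ M with a > n_{k−1}·n_k. -/
open scoped Classical

/-!
Adding one copy of `n_k` to a factorization gives `m(a + n_k) ≤ m(a) + 1`. Conversely, a minimal
factorization of `a + n_k` must use `n_k`: otherwise all of its atoms are at most `n_{k-1}`, so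
there are more than `n_k` of them. By pigeonhole on their prefix sums modulo `n_k`, some nonempty
subcollection sums to `d * n_k`, and `d` is smaller than the size of that subcollection because
every atom is smaller than `n_k`. Replacing the subcollection by `d` copies of `n_k` would shorten
the factorization. Removing one `n_k` from a minimal factorization of `a + n_k` then factors `a`.
-/

open Matrix

theorem Multiset.exists_le_ne_zero_dvd_sum_map {α : Type*} (s : Multiset α) (f : α → ℕ)
    {N : ℕ} (hN : 0 < N) (hs : N ≤ card s) : ∃ t ≤ s, t ≠ 0 ∧ N ∣ (t.map f).sum := by
  obtain ⟨L, rfl⟩ : ∃ L : List α, (L : Multiset α) = s := Quot.exists_rep s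
  obtain ⟨i, hi, j, hj, hij, hmod⟩ := Finset.exists_ne_map_eq_of_card_lt_of_maps_to
    (s := Finset.range (N + 1)) (t := Finset.range N) (by simp)
    (f := fun i => ((L.take i).map f).sum % N) fun i _ => Finset.mem_range.2 (Nat.mod_lt _ hN)
  wlog hij : i < j generalizing i j
  · exact this j hj i hi (Ne.symm ‹_›) hmod.symm (by omega)
  simp only [Finset.mem_range, Multiset.coe_card] at hi hj hs
  refine ⟨((L.take j).drop i : List α), ?_, ?_, ?_⟩
  · exact Multiset.coe_le.2 ((List.drop_sublist _ _).trans (List.take_sublist _ _)).subperm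
  · simp only [ne_eq, Multiset.coe_eq_zero, List.drop_eq_nil_iff, List.length_take]
    omega
  · have hsplit : ((L.take j).map f).sum =
        ((L.take i).map f).sum + (((L.take j).drop i).map f).sum := by
      conv_lhs => rw [← List.take_append_drop i (L.take j), List.take_take, min_eq_left hij.le]
      rw [List.map_append, List.sum_append]
    rw [Multiset.map_coe, Multiset.sum_coe, ← Nat.modEq_zero_iff_dvd]
    refine (Nat.ModEq.add_left_cancel' ((L.take i).map f).sum ?_).symm
    rw [add_zero, ← hsplit]
    exact hmod

variable {ι : Type*} [Fintype ι]

theorem tsub_dotProduct_add_dotProduct {z w : ι → ℕ} (hwz : w ≤ z) (g : ι → ℕ) :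
    (z - w) ⬝ᵥ g + w ⬝ᵥ g = z ⬝ᵥ g := by
  rw [← add_dotProduct, tsub_add_cancel_of_le hwz]

theorem sum_tsub_add_sum {z w : ι → ℕ} (hwz : w ≤ z) :
    ∑ i, (z - w) i + ∑ i, w i = ∑ i, z i := by
  simpa only [dotProduct_one] using tsub_dotProduct_add_dotProduct hwz 1

theorem dotProduct_le_sum_mul {g z : ι → ℕ} {P : ℕ} (h : ∀ i, z i ≠ 0 → g i ≤ P) :
    z ⬝ᵥ g ≤ (∑ i, z i) * P := by
  rw [Finset.sum_mul]
  refine Finset.sum_le_sum fun i _ => ?_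
  by_cases hi : z i = 0
  · simp [hi]
  · exact Nat.mul_le_mul_left _ (h i hi)

variable [DecidableEq ι]

theorem exists_le_ne_zero_dvd_dotProduct (g z : ι → ℕ) {N : ℕ} (hN : 0 < N)
    (hz : N ≤ ∑ i, z i) : ∃ w ≤ z, w ≠ 0 ∧ N ∣ w ⬝ᵥ g := by
  set s : Multiset ι := ∑ i, Multiset.replicate (z i) i
  have hcount : ∀ i, s.count i = z i := by
    simp [s, Multiset.count_sum', Multiset.count_replicate]
  obtain ⟨t, hts, ht0, hdvd⟩ :=
    s.exists_le_ne_zero_dvd_sum_map g hN (by simpa [s, Multiset.card_sum] using hz)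
  refine ⟨fun i => t.count i, fun i => hcount i ▸ Multiset.count_le_of_le i hts, ?_, ?_⟩
  · obtain ⟨x, hx⟩ := Multiset.exists_mem_of_ne_zero ht0
    exact fun h => (Multiset.count_pos.2 hx).ne' (congrFun h x)
  · convert hdvd using 1
    rw [Finset.sum_multiset_map_count, dotProduct]
    refine (Finset.sum_subset (Finset.subset_univ _) fun i _ hi => ?_).symm
    simp [Multiset.count_eq_zero.2 (Multiset.mem_toFinset.not.1 hi)]

theorem exists_dotProduct_eq_sum_lt (g z : ι → ℕ) {j : ι} (hj : 0 < g j)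
    (hlt : ∀ i, z i ≠ 0 → g i < g j) (hlen : g j ≤ ∑ i, z i) :
    ∃ z' : ι → ℕ, z' ⬝ᵥ g = z ⬝ᵥ g ∧ ∑ i, z' i < ∑ i, z i := by
  obtain ⟨w, hwz, hw0, d, hd⟩ := exists_le_ne_zero_dvd_dotProduct g z hj hlen
  have hwlt : ∀ i, w i ≠ 0 → g i < g j := fun i hi =>
    hlt i ((Nat.pos_of_ne_zero hi).trans_le (hwz i)).ne'
  have hwg : w ⬝ᵥ g < (∑ i, w i) * g j := by
    obtain ⟨i₀, hi₀⟩ := Function.ne_iff.1 hw0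
    rw [Finset.sum_mul]
    refine Finset.sum_lt_sum (fun i _ => ?_) ⟨i₀, Finset.mem_univ _, ?_⟩
    · by_cases hi : w i = 0
      · simp [hi]
      · exact Nat.mul_le_mul_left _ (hwlt i hi).le
    · exact Nat.mul_lt_mul_of_pos_left (hwlt i₀ hi₀) (Nat.pos_of_ne_zero hi₀)
  have hd_lt : d < ∑ i, w i := by
    rw [hd, mul_comm] at hwg
    exact Nat.lt_of_mul_lt_mul_right hwg
  refine ⟨z - w + Pi.single j d, ?_, ?_⟩
  · rw [add_dotProduct, single_dotProduct, ← tsub_dotProduct_add_dotProduct hwz g, hd, mul_comm]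
  · have := sum_tsub_add_sum hwz
    simp only [Pi.add_apply, Finset.sum_add_distrib, Finset.sum_pi_single', Finset.mem_univ,
      if_true]
    omega

variable {k : ℕ} {r : Fin k → ℕ} {a : ℕ}

theorem memGen_add_generator (ha : memGen r a) (i : Fin k) : memGen r (a + r i) := by
  obtain ⟨z, hz⟩ := ha
  refine ⟨z + Pi.single i 1, ?_⟩
  rw [← dotProduct, add_dotProduct, single_one_dotProduct, hz]
  rfl

theorem minLen_mem_lenSet (ha : memGen r a) : minLen r a ∈ lenSet r a :=
  Nat.sInf_mem (let ⟨z, hz⟩ := ha; ⟨_, z, hz, rfl⟩)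

theorem minLen_le_sum {z : Fin k → ℕ} (hz : a = z ⬝ᵥ r) : minLen r a ≤ ∑ i, z i :=
  Nat.sInf_le ⟨z, hz, rfl⟩

theorem minLen_add_generator_le (ha : memGen r a) (i : Fin k) :
    minLen r (a + r i) ≤ minLen r a + 1 := by
  obtain ⟨z, hz, hlen⟩ := minLen_mem_lenSet ha
  calc minLen r (a + r i) ≤ ∑ j, (z + Pi.single i 1 : Fin k → ℕ) j := by
        refine minLen_le_sum ?_
        rw [add_dotProduct, single_one_dotProduct, hz]; rfl
    _ = minLen r a + 1 := by
        simp only [Pi.add_apply, Finset.sum_add_distrib, Finset.sum_pi_single', Finset.mem_univ,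
          if_true, hlen]

theorem minLen_add_one_le_sum {z : Fin k → ℕ} {i : Fin k} (hz : a + r i = z ⬝ᵥ r)
    (hi : z i ≠ 0) : minLen r a + 1 ≤ ∑ j, z j := by
  have hle : Pi.single i 1 ≤ z := fun j => by
    rcases eq_or_ne j i with rfl | hj
    · simpa [Nat.one_le_iff_ne_zero] using hi
    · simp [hj]
  have ha : a = (z - Pi.single i 1) ⬝ᵥ r := by
    have := tsub_dotProduct_add_dotProduct hle r
    rw [single_one_dotProduct] at this
    omega
  have := sum_tsub_add_sum hle
  simp only [Finset.sum_pi_single', Finset.mem_univ, if_true] at this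
  have := minLen_le_sum ha
  omega

theorem minLen_quasilinear_general {k : ℕ} (g : Fin (k + 2) → ℕ)
    (hmono : StrictMono g)
    (a : ℕ) (ha : memGen g a)
    (hbig : a > g (Fin.castSucc (Fin.last k)) * g (Fin.last (k + 1))) :
    minLen g (a + g (Fin.last (k + 1))) = minLen g a + 1 := by
  set N := g (Fin.last (k + 1))
  set P := g (Fin.castSucc (Fin.last k))
  have hPN : P < N := hmono (Fin.castSucc_lt_last _)
  refine le_antisymm (minLen_add_generator_le ha _) ?_
  obtain ⟨z, hz, hzlen⟩ := minLen_mem_lenSet (memGen_add_generator ha (Fin.last (k + 1)))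
  rw [hzlen]
  refine minLen_add_one_le_sum hz fun hlast => ?_
  have hsmall : ∀ i, z i ≠ 0 → g i ≤ P := fun i hi =>
    hmono.monotone <| Fin.le_castSucc_iff.2 <| Fin.lt_last_iff_ne_last.2 <| by
      rintro rfl
      exact hi hlast
  have hlen : N < ∑ i, z i := by
    refine Nat.lt_of_mul_lt_mul_left (a := P) ?_
    calc P * N < a + N := by omega
      _ = z ⬝ᵥ g := hz
      _ ≤ (∑ i, z i) * P := dotProduct_le_sum_mul hsmall
      _ = P * ∑ i, z i := mul_comm _ _
  obtain ⟨z', hz', hlt⟩ := exists_dotProduct_eq_sum_lt g z (j := Fin.last (k + 1))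
    (Nat.zero_lt_of_lt hPN) (fun i hi => (hsmall i hi).trans_lt hPN) hlen.le
  exact (minLen_le_sum (hz.trans hz'.symm)).not_gt (hzlen ▸ hlt)

/-- For a numerical monoid `M = ⟨n₁,…,n_k⟩` with `n₁ < ⋯ < n_k` (at least
two generators, so that `n_{k-1}` exists), the minimum length function satisfies
`m(a + n_k) = m(a) + 1` for all `a ∈ M` with `a > n_{k-1}·n_k`. -/
theorem minLen_quasilinear {k : ℕ} (g : Fin (k + 2) → ℕ)
    (hmono : StrictMono g) (hpos : 0 < g 0)
    (a : ℕ) (ha : memGen g a)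
    (hbig : a > g (Fin.castSucc (Fin.last k)) * g (Fin.last (k + 1))) :
    minLen g (a + g (Fin.last (k + 1))) = minLen g a + 1 :=
  minLen_quasilinear_general g hmono a ha hbig
end
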